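/- Let X be a Hausdorff space, E ⊆ C(X) a subspace with the pointwise topology such that δ_{z₁}, δ_{z₂} are linearly independent on E for two distinct points z₁, z₂ ∈ X. If W f = w·(f∘φ) is τ_p-supercyclic on E with supercyclic vector f, then the set of quotients { (∏_{m=0}^{n-1} w(φᵐ(z₁))) · f(φⁿ(z₁)) / ((∏_{m=0}^{n-1} w(φᵐ(z₂))) · f(φⁿ(z₂))) : n ∈ ℕ, f(φⁿ(z₂)) ≠ 0 and the denominator weight product is nonzero } is dense in ℂ. -/

import Mathlib

/-!
Linear independence of `δ_{z₁}, δ_{z₂}` makes `g ↦ (g z₁, g z₂)` a continuous linear surjection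
`E → ℂ²`, so it carries the dense projective orbit `{c • Wⁿ f}` onto a dense subset of `ℂ²`.
The quotient map `(a, b) ↦ a / b` is continuous on the dense open set `b ≠ 0` and onto `ℂ`,
hence the quotients `(c • Wⁿ f)(z₁) / (c • Wⁿ f)(z₂)` are dense; the scalar `c` cancels.
-/

noncomputable def evalFunctional {X : Type*} (E : Submodule ℂ (X → ℂ)) (x : X) :
    ↥E →ₗ[ℂ] ℂ :=
  (LinearMap.proj x).comp E.subtype

def weightedComp {X : Type*} (w : X → ℂ) (φ : X → X) : (X → ℂ) → (X → ℂ) :=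
  fun f x => w x * f (φ x)

lemma weightedComp_iterate_apply {X : Type*} (w : X → ℂ) (φ : X → X) (n : ℕ) (g : X → ℂ)
    (z : X) :
    (weightedComp w φ)^[n] g z = (∏ m ∈ Finset.range n, w (φ^[m] z)) * g (φ^[n] z) := by
  induction n generalizing g with
  | zero => simp
  | succ n ih =>
    rw [Function.iterate_succ_apply, ih, Finset.prod_range_succ, Function.iterate_succ_apply']
    simp only [weightedComp]
    ring

lemma continuous_evalFunctional {X : Type*} (E : Submodule ℂ (X → ℂ)) (x : X) :
    Continuous (evalFunctional E x) :=
  (continuous_apply x).comp continuous_subtype_val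

lemma LinearMap.pi_surjective_of_linearIndependent {ι K V : Type*} [Finite ι] [Field K]
    [AddCommGroup V] [Module K V] {f : ι → V →ₗ[K] K} (hf : LinearIndependent K f) :
    Function.Surjective (LinearMap.pi f) := by
  have hspan := span_flip_eq_top_iff_linearIndependent.mpr
      (hf.map' (LinearMap.ltoFun K V K K) (LinearMap.ker_eq_bot.mpr DFunLike.coe_injective))
  rw [← LinearMap.range_eq_top, eq_top_iff, ← hspan, Submodule.span_le]
  rintro _ ⟨v, rfl⟩
  exact ⟨v, rfl⟩

lemma dense_image_div_of_dense {K : Type*} [Field K] [TopologicalSpace K]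
    [IsTopologicalDivisionRing K] [T1Space K] {S : Set (Fin 2 → K)} (hS : Dense S) :
    Dense ((fun p => p 0 / p 1) '' (S ∩ {p | p 1 ≠ 0})) := by
  rw [dense_iff_inter_open]
  rintro V hV ⟨t, htV⟩
  have hU : IsOpen ({p : Fin 2 → K | p 1 ≠ 0} ∩ (fun p => p 0 / p 1) ⁻¹' V) :=
    ContinuousOn.isOpen_inter_preimage
      ((continuous_apply 0).continuousOn.div (continuous_apply 1).continuousOn fun _ h => h)
      (isOpen_compl_singleton.preimage (continuous_apply 1)) hV
  obtain ⟨p, ⟨hp1, hpV⟩, hpS⟩ := hS.inter_open_nonempty _ hU ⟨![t, 1], by simpa using htV⟩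
  exact ⟨p 0 / p 1, hpV, p, ⟨hpS, hp1⟩, rfl⟩

theorem quotients_dense_of_taup_supercyclic_general
    (X : Type*)
    (E : Submodule ℂ (X → ℂ))
    (w : X → ℂ) (φ : X → X)
    (z₁ z₂ : X)
    (hindep : LinearIndependent ℂ ![evalFunctional E z₁, evalFunctional E z₂])
    (f : ↥E)
    (hsc : Dense {g : ↥E | ∃ (c : ℂ) (n : ℕ),
      (g : X → ℂ) = c • (weightedComp w φ)^[n] (f : X → ℂ)}) :
    Dense {c : ℂ | ∃ n : ℕ,
      (f : X → ℂ) (φ^[n] z₂) ≠ 0 ∧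
      (∏ m ∈ Finset.range n, w (φ^[m] z₂)) ≠ 0 ∧
      c = ((∏ m ∈ Finset.range n, w (φ^[m] z₁)) * (f : X → ℂ) (φ^[n] z₁)) /
          ((∏ m ∈ Finset.range n, w (φ^[m] z₂)) * (f : X → ℂ) (φ^[n] z₂))} := by
  have hcont : Continuous (LinearMap.pi ![evalFunctional E z₁, evalFunctional E z₂]) :=
    continuous_pi fun i => by fin_cases i <;> exact continuous_evalFunctional E _
  refine (dense_image_div_of_dense <| (LinearMap.pi_surjective_of_linearIndependent
    hindep).denseRange.dense_image hcont hsc).mono ?_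
  rintro _ ⟨_, ⟨⟨g, ⟨c, n, hg⟩, rfl⟩, hg₂⟩, rfl⟩
  have hgz : ∀ z, (g : X → ℂ) z =
      c * ((∏ m ∈ Finset.range n, w (φ^[m] z)) * (f : X → ℂ) (φ^[n] z)) :=
    fun z => by rw [hg, Pi.smul_apply, smul_eq_mul, weightedComp_iterate_apply]
  change (g : X → ℂ) z₂ ≠ 0 at hg₂
  rw [hgz, mul_ne_zero_iff, mul_ne_zero_iff] at hg₂
  refine ⟨n, hg₂.2.2, hg₂.2.1, ?_⟩
  change (g : X → ℂ) z₁ / (g : X → ℂ) z₂ = _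
  rw [hgz, hgz, mul_div_mul_left _ _ hg₂.1]

/-- if `δ_{z₁}, δ_{z₂}` are linearly independent on `E` for distinct
`z₁ ≠ z₂` and `f` is a `τ_p`-supercyclic vector for `W f = w·(f∘φ)`, then the set of
quotients `∏_{m<n} w(φᵐ z₁) · f(φⁿ z₁) / (∏_{m<n} w(φᵐ z₂) · f(φⁿ z₂))` (over those `n`
for which the denominator is nonzero) is dense in `ℂ`. -/
theorem quotients_dense_of_taup_supercyclic
    (X : Type*) [TopologicalSpace X] [T2Space X]
    (E : Submodule ℂ (X → ℂ))
    (hEcont : ∀ g ∈ E, Continuous g)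
    (w : X → ℂ) (φ : X → X) (hw : Continuous w) (hφ : Continuous φ)
    (hinv : ∀ g ∈ E, weightedComp w φ g ∈ E)
    (z₁ z₂ : X) (hz : z₁ ≠ z₂)
    (hindep : LinearIndependent ℂ ![evalFunctional E z₁, evalFunctional E z₂])
    (f : ↥E)
    (hsc : Dense {g : ↥E | ∃ (c : ℂ) (n : ℕ),
      (g : X → ℂ) = c • (weightedComp w φ)^[n] (f : X → ℂ)}) :
    Dense {c : ℂ | ∃ n : ℕ,
      (f : X → ℂ) (φ^[n] z₂) ≠ 0 ∧
      (∏ m ∈ Finset.range n, w (φ^[m] z₂)) ≠ 0 ∧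
      c = ((∏ m ∈ Finset.range n, w (φ^[m] z₁)) * (f : X → ℂ) (φ^[n] z₁)) /
          ((∏ m ∈ Finset.range n, w (φ^[m] z₂)) * (f : X → ℂ) (φ^[n] z₂))} :=
  quotients_dense_of_taup_supercyclic_general X E w φ z₁ z₂ hindep f hsc
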